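/- arXiv:2205.14546 — 3 statements merged into one kernel-verified Lean document; each statement's English description precedes it below -/
import Mathlib

section
/- Let (Ω, P) be a finite probability space and Ŷ, Y : Ω → ℝ random variables, with square loss l(ŷ,y) = (ŷ-y)²/2. Then the risk E[l(Ŷ,Y)] is stationary under all output perturbations, i.e. E[∂_ŷ l(Ŷ,Y) · δ(Ŷ)] = 0 for every δ : ℝ → ℝ, if and only if E[Y | Ŷ = v] = v for every v in the range of Ŷ. -/
open Classical in
/-- IRM invariance for the square loss: the risk is stationary under all output
perturbations iff `E[Y | Ŷ = v] = v` for every `v` in the range of `Ŷ`. -/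
theorem irm_invariance_square_loss
    {Ω : Type*} [Fintype Ω] (P : Ω → ℝ) (hPpos : ∀ ω, 0 < P ω)
    (hPsum : ∑ ω, P ω = 1) (Yhat Y : Ω → ℝ) :
    (∀ δ : ℝ → ℝ, ∑ ω, P ω * (Yhat ω - Y ω) * δ (Yhat ω) = 0) ↔
      (∀ v ∈ Set.range Yhat,
        (∑ ω with Yhat ω = v, P ω * Y ω) / (∑ ω with Yhat ω = v, P ω) = v) := by
  have key : ∀ v, ∑ ω with Yhat ω = v, P ω * (Yhat ω - Y ω)
      = v * (∑ ω with Yhat ω = v, P ω) - (∑ ω with Yhat ω = v, P ω * Y ω) := by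
    intro v
    rw [Finset.mul_sum, ← Finset.sum_sub_distrib]
    apply Finset.sum_congr rfl
    intro ω hω
    rw [Finset.mem_filter] at hω
    rw [hω.2]; ring
  have Spos : ∀ v ∈ Set.range Yhat, 0 < ∑ ω with Yhat ω = v, P ω := by
    rintro v ⟨ω0, hω0⟩
    apply Finset.sum_pos' (fun ω _ => (hPpos ω).le)
    exact ⟨ω0, Finset.mem_filter.mpr ⟨Finset.mem_univ _, hω0⟩, hPpos ω0⟩
  constructor
  · intro h v hv
    have hδ := h (fun x => if x = v then 1 else 0)
    simp only [mul_ite, mul_one, mul_zero] at hδ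
    rw [← Finset.sum_filter] at hδ
    rw [key v] at hδ
    rw [div_eq_iff (Spos v hv).ne']
    linarith
  · intro h δ
    rw [← Finset.sum_fiberwise_of_maps_to
      (fun ω _ => Finset.mem_image_of_mem Yhat (Finset.mem_univ ω)) _]
    apply Finset.sum_eq_zero
    intro v hv
    have hv' : v ∈ Set.range Yhat := by
      rcases Finset.mem_image.mp hv with ⟨ω, _, hω⟩
      exact ⟨ω, hω⟩
    have h2 := h v hv'
    rw [div_eq_iff (Spos v hv').ne'] at h2
    have : ∑ ω with Yhat ω = v, P ω * (Yhat ω - Y ω) * δ (Yhat ω)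
        = (∑ ω with Yhat ω = v, P ω * (Yhat ω - Y ω)) * δ v := by
      rw [Finset.sum_mul]
      apply Finset.sum_congr rfl
      intro ω hω
      rw [Finset.mem_filter] at hω
      rw [hω.2]
    rw [this, key v, h2]
    ring
end

section
/- Let (Ω₁, P₁) and (Ω₂, P₂) be two finite probability spaces (two environments) with random variables Ŷᵢ, Yᵢ : Ωᵢ → ℝ, and square loss. Then the change in risk under any label perturbation δ : ℝ → ℝ is equal across the two environments, i.e. E₁[∂_y l(Ŷ₁,Y₁)·δ(Y₁)] = E₂[∂_y l(Ŷ₂,Y₂)·δ(Y₂)] for all δ, if and only if for every label value v attained in both environments, E₁[Ŷ₁ | Y₁ = v] = E₂[Ŷ₂ | Y₂ = v], provided the two environments have the same label distribution (the same set of label values with the same probabilities). -/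
/-!
Testing against all perturbations `δ` says exactly that the pushforwards of the residual
weights `Pₑ (Yₑ - Ŷₑ)` along `Yₑ` agree, i.e. that their fiber sums
`v m(v) - sₑ(v)` agree for every label `v`, where `m(v)` is the common label mass and
`sₑ(v) = ∑_{Yₑ = v} Pₑ Ŷₑ`. So the condition is `s₁ = s₂`; dividing by `m(v)`, which is
positive exactly on the common label range (and both `sₑ(v)` vanish off it), turns this
into equality of the conditional expectations.
-/

open Finset

section FiberSums

variable {Ω α R : Type*} [Fintype Ω] [DecidableEq α]

theorem sum_mul_comp_eq_sum_fiberwise [CommSemiring R] (f : Ω → R) (Y : Ω → α) (δ : α → R)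
    {t : Finset α} (hY : ∀ ω, Y ω ∈ t) :
    ∑ ω, f ω * δ (Y ω) = ∑ v ∈ t, (∑ ω with Y ω = v, f ω) * δ v := by
  rw [← sum_fiberwise_of_maps_to (fun ω _ => hY ω)]
  refine sum_congr rfl fun v _ => ?_
  rw [sum_mul]
  exact sum_congr rfl fun ω hω => by rw [(mem_filter.1 hω).2]

theorem sum_mul_ite_eq_sum_fiber [CommSemiring R] (f : Ω → R) (Y : Ω → α) (v : α) :
    ∑ ω, f ω * (if Y ω = v then 1 else 0) = ∑ ω with Y ω = v, f ω := by
  simp only [mul_ite, mul_one, mul_zero, sum_filter]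

theorem sum_mul_comp_eq_iff_fiber_sums_eq {Ω' : Type*} [Fintype Ω'] [CommSemiring R]
    (f₁ : Ω → R) (f₂ : Ω' → R) (Y₁ : Ω → α) (Y₂ : Ω' → α) :
    (∀ δ : α → R, ∑ ω, f₁ ω * δ (Y₁ ω) = ∑ ω, f₂ ω * δ (Y₂ ω)) ↔
      ∀ v, ∑ ω with Y₁ ω = v, f₁ ω = ∑ ω with Y₂ ω = v, f₂ ω := by
  constructor
  · intro h v
    simpa only [sum_mul_ite_eq_sum_fiber] using h fun y => if y = v then 1 else 0
  · intro h δ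
    let t := univ.image Y₁ ∪ univ.image Y₂
    have hY₁ : ∀ ω, Y₁ ω ∈ t := fun ω => mem_union_left _ (mem_image_of_mem _ (mem_univ ω))
    have hY₂ : ∀ ω, Y₂ ω ∈ t := fun ω => mem_union_right _ (mem_image_of_mem _ (mem_univ ω))
    rw [sum_mul_comp_eq_sum_fiberwise f₁ Y₁ δ hY₁, sum_mul_comp_eq_sum_fiberwise f₂ Y₂ δ hY₂]
    exact sum_congr rfl fun v _ => by rw [h v]

theorem sum_fiber_eq_zero_of_notMem_range [AddCommMonoid R] (f : Ω → R) {Y : Ω → α} {v : α}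
    (hv : v ∉ Set.range Y) : ∑ ω with Y ω = v, f ω = 0 :=
  sum_eq_zero fun ω hω => absurd ⟨ω, (mem_filter.1 hω).2⟩ hv

theorem sum_fiber_pos_iff {P : Ω → ℝ} (hP : ∀ ω, 0 < P ω) (Y : Ω → α) (v : α) :
    0 < ∑ ω with Y ω = v, P ω ↔ v ∈ Set.range Y := by
  constructor
  · intro hpos
    by_contra hv
    rw [sum_fiber_eq_zero_of_notMem_range P hv] at hpos
    exact hpos.false
  · rintro ⟨ω₀, rfl⟩
    exact sum_pos (fun ω _ => hP ω) ⟨ω₀, by simp⟩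

theorem sum_fiber_mul_sub (P Yhat Y : Ω → ℝ) (v : ℝ) :
    ∑ ω with Y ω = v, P ω * (Y ω - Yhat ω)
      = v * ∑ ω with Y ω = v, P ω - ∑ ω with Y ω = v, P ω * Yhat ω := by
  rw [mul_sum, ← sum_sub_distrib]
  exact sum_congr rfl fun ω hω => by rw [(mem_filter.1 hω).2]; ring

end FiberSums

open Classical in
theorem mri_invariance_square_loss_general
    {Ω₁ Ω₂ : Type*} [Fintype Ω₁] [Fintype Ω₂]
    (P₁ : Ω₁ → ℝ) (P₂ : Ω₂ → ℝ)
    (hP₁pos : ∀ ω, 0 < P₁ ω) (hP₂pos : ∀ ω, 0 < P₂ ω)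
    (Yhat₁ Y₁ : Ω₁ → ℝ) (Yhat₂ Y₂ : Ω₂ → ℝ)
    (hlabel : ∀ v : ℝ, (∑ ω with Y₁ ω = v, P₁ ω) = (∑ ω with Y₂ ω = v, P₂ ω)) :
    (∀ δ : ℝ → ℝ,
        ∑ ω, P₁ ω * (Y₁ ω - Yhat₁ ω) * δ (Y₁ ω)
          = ∑ ω, P₂ ω * (Y₂ ω - Yhat₂ ω) * δ (Y₂ ω)) ↔
      (∀ v : ℝ, v ∈ Set.range Y₁ → v ∈ Set.range Y₂ →
        (∑ ω with Y₁ ω = v, P₁ ω * Yhat₁ ω) / (∑ ω with Y₁ ω = v, P₁ ω)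
          = (∑ ω with Y₂ ω = v, P₂ ω * Yhat₂ ω) / (∑ ω with Y₂ ω = v, P₂ ω)) := by
  rw [sum_mul_comp_eq_iff_fiber_sums_eq]
  refine forall_congr' fun v => ?_
  have hrange : v ∈ Set.range Y₁ ↔ v ∈ Set.range Y₂ := by
    rw [← sum_fiber_pos_iff hP₁pos, ← sum_fiber_pos_iff hP₂pos, hlabel v]
  rw [sum_fiber_mul_sub, sum_fiber_mul_sub, hlabel v, sub_right_inj]
  by_cases hv₁ : v ∈ Set.range Y₁
  · have hm := (sum_fiber_pos_iff hP₂pos Y₂ v).2 (hrange.1 hv₁)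
    simp only [hv₁, hrange.1 hv₁, div_left_inj' hm.ne', forall_const]
  · simp only [hv₁, sum_fiber_eq_zero_of_notMem_range _ hv₁,
      sum_fiber_eq_zero_of_notMem_range _ (hrange.not.1 hv₁), false_implies]

open Classical in
/-- MRI invariance for the square loss: assuming the two environments have the
same label distribution, the change in risk under any label perturbation is
shared across the environments iff the label-conditioned feature expectation
`E_e[Ŷ | Y = v]` is conserved. -/
theorem mri_invariance_square_loss
    {Ω₁ Ω₂ : Type*} [Fintype Ω₁] [Fintype Ω₂]
    (P₁ : Ω₁ → ℝ) (P₂ : Ω₂ → ℝ)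
    (hP₁pos : ∀ ω, 0 < P₁ ω) (hP₂pos : ∀ ω, 0 < P₂ ω)
    (hP₁sum : ∑ ω, P₁ ω = 1) (hP₂sum : ∑ ω, P₂ ω = 1)
    (Yhat₁ Y₁ : Ω₁ → ℝ) (Yhat₂ Y₂ : Ω₂ → ℝ)
    (hlabel : ∀ v : ℝ, (∑ ω with Y₁ ω = v, P₁ ω) = (∑ ω with Y₂ ω = v, P₂ ω)) :
    (∀ δ : ℝ → ℝ,
        ∑ ω, P₁ ω * (Y₁ ω - Yhat₁ ω) * δ (Y₁ ω)
          = ∑ ω, P₂ ω * (Y₂ ω - Yhat₂ ω) * δ (Y₂ ω)) ↔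
      (∀ v : ℝ, v ∈ Set.range Y₁ → v ∈ Set.range Y₂ →
        (∑ ω with Y₁ ω = v, P₁ ω * Yhat₁ ω) / (∑ ω with Y₁ ω = v, P₁ ω)
          = (∑ ω with Y₂ ω = v, P₂ ω * Yhat₂ ω) / (∑ ω with Y₂ ω = v, P₂ ω)) :=
  mri_invariance_square_loss_general P₁ P₂ hP₁pos hP₂pos Yhat₁ Y₁ Yhat₂ Y₂ hlabel
end

section
/- Theorem (MRI-v1 eliminates spurious features in the linear SEM): Let there be environments e ∈ E_tr, each a finite probability space carrying random variables z_i^e ∈ ℝ^{d_i}, z_s^e ∈ ℝ^{d_s}, y^e ∈ ℝ. Consider the linear predictor ŷ = w_iᵀ z_i + w_sᵀ z_s. Suppose E_e[z_i y] is the same vector for all e ∈ E_tr (the invariant feature correlations are conserved), and suppose the centered matrix M' whose columns are E_e[z_s y] - (1/|E_tr|)∑_{e'} E_{e'}[z_s y] has rank d_s. Then the MRI-v1 constraint — E_e[ŷ·y] takes the same value for all e ∈ E_tr — holds if and only if w_s = 0. -/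
/-!
Write `S e = E_e[z_s y]` and `A e = E_e[z_i y]`. By linearity `E_e[ŷ y] = w_i ⬝ A e + w_s ⬝ S e`,
and `A` does not depend on `e`, so the MRI-v1 constraint says exactly that `e ↦ w_s ⬝ S e` is
constant. A constant function has zero centering, and the centering of `e ↦ w_s ⬝ S e` is the
vector `w_sᵀ M'`; since `M'` has full row rank, `w_sᵀ M' = 0` forces `w_s = 0`.
-/

open Matrix Finset

theorem Matrix.linearIndependent_row_of_rank_eq_card {m n R : Type*} [Field R] [Fintype m]
    [Fintype n]
    {M : Matrix m n R} (h : M.rank = Fintype.card m) : LinearIndependent R M.row := by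
  rw [rank_eq_finrank_span_row] at h
  exact linearIndependent_iff_card_eq_finrank_span.mpr h.symm

theorem Matrix.vecMul_injective_of_rank_eq_card {m n R : Type*} [Field R] [Fintype m]
    [Fintype n]
    {M : Matrix m n R} (h : M.rank = Fintype.card m) : Function.Injective M.vecMul :=
  vecMul_injective_iff.mpr (linearIndependent_row_of_rank_eq_card h)

theorem sum_mul_dotProduct_mul {Ω ι R : Type*} [CommSemiring R] [Fintype Ω] [Fintype ι]
    (p : Ω → R) (w : ι → R) (z : Ω → ι → R) (y : Ω → R) :
    ∑ ω, p ω * ((w ⬝ᵥ z ω) * y ω) = w ⬝ᵥ fun k => ∑ ω, p ω * (z ω k * y ω) := by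
  simp only [dotProduct, sum_mul, mul_sum]
  rw [sum_comm]
  exact sum_congr rfl fun _ _ => sum_congr rfl fun _ _ => by ring

theorem sub_sum_div_card_eq_zero {E R : Type*} [Field R] [CharZero R] [Fintype E] {f : E → R}
    (hf : ∀ e e', f e = f e') (e : E) : f e - (∑ e', f e') / Fintype.card E = 0 := by
  have : Nonempty E := ⟨e⟩
  have hcard : (Fintype.card E : R) ≠ 0 := Nat.cast_ne_zero.mpr Fintype.card_ne_zero
  rw [sum_congr rfl fun e' _ => hf e' e, sum_const, card_univ, nsmul_eq_mul,
    mul_div_cancel_left₀ _ hcard, sub_self]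

theorem vecMul_apply_of_centered {E ι R : Type*} [Field R] [Fintype E] [Fintype ι]
    {S : E → ι → R} {M : Matrix ι E R}
    (hM : ∀ k e, M k e = S e k - (∑ e', S e' k) / Fintype.card E) (w : ι → R) (e : E) :
    (w ᵥ* M) e = w ⬝ᵥ S e - (∑ e', w ⬝ᵥ S e') / Fintype.card E := by
  simp only [vecMul, dotProduct, hM, mul_sub, sum_sub_distrib, mul_div_assoc', mul_sum, ← sum_div]
  rw [sum_comm]

theorem exists_forall_eq_const_of_forall_eq {E α : Type*} [Nonempty α] {f : E → α}
    (hf : ∀ e e', f e = f e') : ∃ c, ∀ e, f e = c := by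
  rcases isEmpty_or_nonempty E with _ | ⟨⟨e₀⟩⟩
  · exact ⟨Classical.arbitrary α, isEmptyElim⟩
  · exact ⟨f e₀, fun e => hf e e₀⟩

theorem mriv1_eliminates_spurious_features_general
    {E : Type*} [Fintype E] {di ds : ℕ}
    {Ω : E → Type*} [∀ e, Fintype (Ω e)]
    (P : ∀ e, Ω e → ℝ)
    (zi : ∀ e, Ω e → Fin di → ℝ) (zs : ∀ e, Ω e → Fin ds → ℝ) (y : ∀ e, Ω e → ℝ)
    (hinv : ∀ e e' : E, ∀ j : Fin di,
      (∑ ω, P e ω * (zi e ω j * y e ω)) = (∑ ω, P e' ω * (zi e' ω j * y e' ω)))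
    (M' : Matrix (Fin ds) E ℝ)
    (hM' : ∀ k e, M' k e = (∑ ω, P e ω * (zs e ω k * y e ω))
        - (∑ e' : E, ∑ ω, P e' ω * (zs e' ω k * y e' ω)) / Fintype.card E)
    (hrank : M'.rank = ds)
    (wi : Fin di → ℝ) (ws : Fin ds → ℝ) :
    (∃ c : ℝ, ∀ e : E,
        ∑ ω, P e ω * ((wi ⬝ᵥ zi e ω + ws ⬝ᵥ zs e ω) * y e ω) = c) ↔ ws = 0 := by
  set A : E → Fin di → ℝ := fun e j => ∑ ω, P e ω * (zi e ω j * y e ω)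
  set S : E → Fin ds → ℝ := fun e k => ∑ ω, P e ω * (zs e ω k * y e ω)
  have hA : ∀ e e', A e = A e' := fun e e' => funext (hinv e e')
  have hsplit : ∀ e, ∑ ω, P e ω * ((wi ⬝ᵥ zi e ω + ws ⬝ᵥ zs e ω) * y e ω)
      = wi ⬝ᵥ A e + ws ⬝ᵥ S e := fun e => by
    simp only [add_mul, mul_add, sum_add_distrib, sum_mul_dotProduct_mul, A, S]
  simp only [hsplit]
  constructor
  · rintro ⟨c, hc⟩
    have hS : ∀ e e', ws ⬝ᵥ S e = ws ⬝ᵥ S e' := fun e e' =>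
      add_left_cancel (a := wi ⬝ᵥ A e) (by rw [hc e, hA e e', hc e'])
    refine vecMul_injective_of_rank_eq_card (hrank.trans (Fintype.card_fin ds).symm) ?_
    show ws ᵥ* M' = 0 ᵥ* M'
    ext e
    rw [zero_vecMul, vecMul_apply_of_centered hM', sub_sum_div_card_eq_zero hS, Pi.zero_apply]
  · rintro rfl
    simpa only [zero_dotProduct, add_zero] using
      exists_forall_eq_const_of_forall_eq fun e e' => congrArg (wi ⬝ᵥ ·) (hA e e')

/-- Theorem 1 (MRI-v1 eliminates spurious features in the general linear SEM).
Environments are finite probability spaces carrying latent features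
`z_i ∈ ℝ^{d_i}`, `z_s ∈ ℝ^{d_s}` and label `y`. If the invariant correlations
`E_e[z_i y]` are conserved across environments and the centered matrix of
spurious correlations `E_e[z_s y]` has full rank `d_s`, then the linear
predictor `ŷ = w_iᵀ z_i + w_sᵀ z_s` satisfies the MRI-v1 constraint
(`E_e[ŷ y]` constant over environments) iff `w_s = 0`. -/
theorem mriv1_eliminates_spurious_features
    {E : Type*} [Fintype E] {di ds : ℕ} (hE : ds < Fintype.card E)
    {Ω : E → Type*} [∀ e, Fintype (Ω e)]
    (P : ∀ e, Ω e → ℝ) (hPpos : ∀ e ω, 0 < P e ω) (hPsum : ∀ e, ∑ ω, P e ω = 1)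
    (zi : ∀ e, Ω e → Fin di → ℝ) (zs : ∀ e, Ω e → Fin ds → ℝ) (y : ∀ e, Ω e → ℝ)
    (hinv : ∀ e e' : E, ∀ j : Fin di,
      (∑ ω, P e ω * (zi e ω j * y e ω)) = (∑ ω, P e' ω * (zi e' ω j * y e' ω)))
    (M' : Matrix (Fin ds) E ℝ)
    (hM' : ∀ k e, M' k e = (∑ ω, P e ω * (zs e ω k * y e ω))
        - (∑ e' : E, ∑ ω, P e' ω * (zs e' ω k * y e' ω)) / Fintype.card E)
    (hrank : M'.rank = ds)
    (wi : Fin di → ℝ) (ws : Fin ds → ℝ) :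
    (∃ c : ℝ, ∀ e : E,
        ∑ ω, P e ω * ((wi ⬝ᵥ zi e ω + ws ⬝ᵥ zs e ω) * y e ω) = c) ↔ ws = 0 :=
  mriv1_eliminates_spurious_features_general P zi zs y hinv M' hM' hrank wi ws
end
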